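/- Let A be skew-selfadjoint on a Hilbert space H and let M₁ : H → H be bounded with sym(M₁) := (M₁ + M₁*)/2 ≥ c > 0. Then M₁ + A : D(A) → H is bijective with ‖(M₁ + A)⁻¹‖ ≤ 1/c, i.e. the static Friedrichs problem (M₁ + A)u = f is well-posed. -/

import Mathlib

/-!
For `u ∈ D(A)` skewness gives `⟪u, Au⟫ = 0`, so `c‖u‖² ≤ ⟪u, (M₁ + A)u⟫ ≤ ‖u‖ ‖(M₁ + A)u‖`:
this is the estimate, and it makes `M₁ + A` injective. Since `A = -A*` is closed, so is
`M₁ + A`, and a closed operator that is bounded below has closed range. The range is also dense: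
if `f ⊥ (M₁ + A)D(A)` then `f ∈ D(A*) = D(A)` with `Af = M₁* f`, hence
`c‖f‖² ≤ ⟪f, M₁ f⟫ = ⟪f, Af⟫ = 0`.
-/

open scoped RealInnerProductSpace

theorem norm_le_one_div_mul_of_mul_sq_le_inner {E : Type*} [NormedAddCommGroup E]
    [InnerProductSpace ℝ E] {c : ℝ} {x y : E} (hc : 0 < c) (h : c * ‖x‖ ^ 2 ≤ ⟪x, y⟫) :
    ‖x‖ ≤ 1 / c * ‖y‖ := by
  rcases (norm_nonneg x).eq_or_lt with hx | hx
  · rw [← hx]; positivity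
  · rw [one_div_mul_eq_div, le_div_iff₀ hc]
    have hxy : c * ‖x‖ ^ 2 ≤ ‖x‖ * ‖y‖ := h.trans (real_inner_le_norm x y)
    nlinarith

namespace LinearPMap

section Closed

variable {R E F : Type*} [CommRing R] [AddCommGroup E] [AddCommGroup F] [Module R E] [Module R F]
  [TopologicalSpace E] [TopologicalSpace F]

theorem IsClosed.neg [IsTopologicalAddGroup F] {f : E →ₗ.[R] F} (hf : f.IsClosed) :
    (-f).IsClosed := by
  have : ((-f).graph : Set (E × F)) = Prod.map id Neg.neg ⁻¹' f.graph := by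
    ext ⟨x, y⟩
    simp [mem_graph_iff, neg_eq_iff_eq_neg]
  rw [LinearPMap.IsClosed, this]
  exact hf.preimage (continuous_id.prodMap continuous_neg)

theorem IsClosed.vadd [IsTopologicalAddGroup F] {f : E →ₗ.[R] F} (hf : f.IsClosed)
    (g : E →L[R] F) : ((g : E →ₗ[R] F) +ᵥ f).IsClosed := by
  have : (((g : E →ₗ[R] F) +ᵥ f).graph : Set (E × F)) =
      (fun p : E × F => (p.1, p.2 - g p.1)) ⁻¹' f.graph := by
    ext ⟨x, y⟩
    simp [mem_graph_iff, eq_sub_iff_add_eq', add_comm]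
  rw [LinearPMap.IsClosed, this]
  exact hf.preimage (continuous_fst.prodMk (continuous_snd.sub (g.continuous.comp continuous_fst)))

end Closed

theorem IsClosed.isClosed_range_of_bound {𝕜 E F : Type*} [NontriviallyNormedField 𝕜]
    [NormedAddCommGroup E] [NormedSpace 𝕜 E] [CompleteSpace E]
    [NormedAddCommGroup F] [NormedSpace 𝕜 F] [CompleteSpace F]
    {f : E →ₗ.[𝕜] F} (hf : f.IsClosed) {C : ℝ} (hC : ∀ x : f.domain, ‖(x : E)‖ ≤ C * ‖f x‖) :
    _root_.IsClosed (LinearMap.range f.toFun : Set F) := by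
  have : CompleteSpace f.graph := hf.completeSpace_coe
  set snd : f.graph →L[𝕜] F := (ContinuousLinearMap.snd 𝕜 E F).comp f.graph.subtypeL
  have hsnd : AntilipschitzWith (max C 1).toNNReal snd := by
    refine snd.antilipschitz_of_bound fun ⟨⟨x, y⟩, hxy⟩ => ?_
    obtain ⟨u, rfl, rfl⟩ := f.mem_graph_iff.mp hxy
    have hTu := norm_nonneg (f u)
    calc ‖(((u : E), f u) : E × F)‖ = max ‖(u : E)‖ ‖f u‖ := rfl
      _ ≤ max C 1 * ‖f u‖ := max_le ((hC u).trans (by gcongr; exact le_max_left _ _))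
          (le_mul_of_one_le_left hTu (le_max_right _ _))
      _ = (max C 1).toNNReal * ‖snd ⟨(u, f u), hxy⟩‖ := by
          rw [Real.coe_toNNReal _ (zero_le_one.trans (le_max_right _ _))]; rfl
  have hrange : Set.range snd = LinearMap.range f.toFun := by
    rw [← graph_map_snd_eq_range]
    ext y
    simp [snd]
  rw [← hrange]
  exact hsnd.isClosed_range snd.uniformContinuous

section SkewAdjoint

variable {H : Type*} [NormedAddCommGroup H] [InnerProductSpace ℝ H] [CompleteSpace H]
  {A : H →ₗ.[ℝ] H}

theorem adjoint_domain_eq_of_adjoint_eq_neg (hA : A† = -A) : A†.domain = A.domain := by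
  rw [hA]; rfl

theorem adjoint_apply_of_adjoint_eq_neg (hA : A† = -A) {x : H} (hx : x ∈ A†.domain)
    (hx' : x ∈ A.domain) : A† ⟨x, hx⟩ = -A ⟨x, hx'⟩ :=
  (LinearPMap.ext_iff.mp hA).2 (hg := hx')

theorem dense_domain_of_adjoint_eq_neg (hA : A† = -A) : Dense (A.domain : Set H) := by
  by_contra h
  have hzero : ∀ x : A.domain, A x = 0 := fun x => by
    rw [← neg_eq_zero, ← adjoint_apply_of_adjoint_eq_neg hA
      ((adjoint_domain_eq_of_adjoint_eq_neg hA).symm ▸ x.2), adjoint_apply_of_not_dense h]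
  have htop : A.domain = ⊤ := by
    rw [← adjoint_domain_eq_of_adjoint_eq_neg hA, Submodule.eq_top_iff']
    exact fun y => mem_adjoint_domain_of_exists y ⟨0, fun x => by simp [hzero]⟩
  exact h (htop ▸ dense_univ)

theorem isClosed_of_adjoint_eq_neg (hA : A† = -A) : A.IsClosed := by
  rw [← neg_neg A, ← hA]
  exact (adjoint_isClosed (dense_domain_of_adjoint_eq_neg hA)).neg

theorem inner_apply_self_eq_zero_of_adjoint_eq_neg (hA : A† = -A) (x : A.domain) :
    ⟪(x : H), A x⟫ = 0 := by
  have hx : (x : H) ∈ A†.domain := (adjoint_domain_eq_of_adjoint_eq_neg hA).symm ▸ x.2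
  have h := adjoint_isFormalAdjoint (dense_domain_of_adjoint_eq_neg hA) ⟨x, hx⟩ x
  rw [adjoint_apply_of_adjoint_eq_neg hA hx x.2, inner_neg_left, real_inner_comm] at h
  linarith

theorem exists_mem_domain_of_adjoint_eq_neg (hA : A† = -A) {y z : H}
    (h : ∀ x : A.domain, ⟪z, (x : H)⟫ = ⟪y, A x⟫) : ∃ hy : y ∈ A.domain, A ⟨y, hy⟩ = -z := by
  have hy : y ∈ A†.domain := mem_adjoint_domain_of_exists y ⟨z, h⟩
  have hAy := adjoint_apply_eq (dense_domain_of_adjoint_eq_neg hA) ⟨y, hy⟩ h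
  refine ⟨adjoint_domain_eq_of_adjoint_eq_neg hA ▸ hy, ?_⟩
  rw [← neg_neg (A _), ← adjoint_apply_of_adjoint_eq_neg hA hy, hAy]

end SkewAdjoint

section Friedrichs

variable {H : Type*} [NormedAddCommGroup H] [InnerProductSpace ℝ H] [CompleteSpace H]
  {A : H →ₗ.[ℝ] H} {M : H →L[ℝ] H} {c : ℝ}

theorem norm_le_one_div_mul_norm_vadd_apply (hA : A† = -A) (hc : 0 < c)
    (hM : ∀ x : H, c * ‖x‖ ^ 2 ≤ ⟪x, M x⟫) (x : A.domain) :
    ‖(x : H)‖ ≤ 1 / c * ‖((M : H →ₗ[ℝ] H) +ᵥ A) x‖ := by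
  refine norm_le_one_div_mul_of_mul_sq_le_inner hc ?_
  calc c * ‖(x : H)‖ ^ 2 ≤ ⟪(x : H), M x⟫ := hM x
    _ = ⟪(x : H), M x + A x⟫ := by
      rw [inner_add_right, inner_apply_self_eq_zero_of_adjoint_eq_neg hA, add_zero]

theorem orthogonal_range_vadd_eq_bot (hA : A† = -A) (hc : 0 < c)
    (hM : ∀ x : H, c * ‖x‖ ^ 2 ≤ ⟪x, M x⟫) :
    (LinearMap.range ((M : H →ₗ[ℝ] H) +ᵥ A).toFun)ᗮ = ⊥ := by
  refine (Submodule.eq_bot_iff _).mpr fun y hy => ?_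
  have hy' : ∀ x : A.domain, ⟪-(M.adjoint y), (x : H)⟫ = ⟪y, A x⟫ := fun x => by
    have h := Submodule.inner_right_of_mem_orthogonal (LinearMap.mem_range_self _ x) hy
    change ⟪M x + A x, y⟫ = 0 at h
    rw [inner_add_left, ← ContinuousLinearMap.adjoint_inner_right] at h
    rw [inner_neg_left, real_inner_comm (x : H), real_inner_comm (A x) y]
    linarith
  obtain ⟨hyA, hAy⟩ := exists_mem_domain_of_adjoint_eq_neg hA hy'
  rw [neg_neg] at hAy
  have hMy : ⟪y, M y⟫ = 0 := by
    rw [real_inner_comm, ← ContinuousLinearMap.adjoint_inner_right, ← hAy,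
      inner_apply_self_eq_zero_of_adjoint_eq_neg hA ⟨y, hyA⟩]
  have hy2 : ‖y‖ ^ 2 ≤ 0 := by nlinarith [hM y]
  simpa using hy2

theorem range_vadd_eq_top (hA : A† = -A) (hc : 0 < c)
    (hM : ∀ x : H, c * ‖x‖ ^ 2 ≤ ⟪x, M x⟫) :
    LinearMap.range ((M : H →ₗ[ℝ] H) +ᵥ A).toFun = ⊤ := by
  have hclosed := ((isClosed_of_adjoint_eq_neg hA).vadd M).isClosed_range_of_bound
    (norm_le_one_div_mul_norm_vadd_apply hA hc hM)
  have : CompleteSpace (LinearMap.range ((M : H →ₗ[ℝ] H) +ᵥ A).toFun) :=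
    hclosed.completeSpace_coe
  exact Submodule.orthogonal_eq_bot_iff.mp (orthogonal_range_vadd_eq_bot hA hc hM)

end Friedrichs

end LinearPMap

/-- Let `A` be skew-selfadjoint on a Hilbert space `H` and `M₁` bounded
with `sym M₁ ≥ c > 0` (i.e. `⟪x, M₁ x⟫ ≥ c ‖x‖²`). Then `M₁ + A : D(A) → H` is bijective
with `‖(M₁ + A)⁻¹‖ ≤ 1/c`: the static Friedrichs problem `(M₁ + A) u = f` is
well-posed. -/
theorem static_friedrichs_well_posed {H : Type*}
    [NormedAddCommGroup H] [InnerProductSpace ℝ H] [CompleteSpace H]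
    (A : H →ₗ.[ℝ] H) (hA : A.adjoint = -A)
    (M₁ : H →L[ℝ] H) (c : ℝ) (hc : 0 < c)
    (hM₁ : ∀ x : H, c * ‖x‖ ^ 2 ≤ ⟪x, M₁ x⟫) :
    (∀ f : H, ∃! u : A.domain, M₁ (u : H) + A u = f) ∧
    (∀ u : A.domain, ‖(u : H)‖ ≤ (1 / c) * ‖M₁ (u : H) + A u‖) := by
  have hbound := LinearPMap.norm_le_one_div_mul_norm_vadd_apply hA hc hM₁
  have hinj : Function.Injective ((M₁ : H →ₗ[ℝ] H) +ᵥ A).toFun := by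
    refine (injective_iff_map_eq_zero _).mpr fun u hu => Subtype.ext ?_
    simpa [show M₁ (u : H) + A u = 0 from hu] using hbound u
  refine ⟨fun f => ?_, hbound⟩
  obtain ⟨u, rfl⟩ := LinearMap.range_eq_top.mp (LinearPMap.range_vadd_eq_top hA hc hM₁) f
  exact ⟨u, rfl, fun v hv => hinj hv⟩
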